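/- Let G be a directed partially ordered group and n ≥ 1. Then the pseudo-effect algebra E = Γ(ℤ ⃗× G, (n,0)) admits exactly one state, namely s(i,g) = i/n, and this state is an (n+1)-valued discrete state (and hence extremal). -/

import Mathlib

/-- A pseudo-effect algebra (PEA): a structure with a partial addition `add`
(with domain of definition `D`), a zero and a one, satisfying (PE1)-(PE4)
together with the (derivable) neutrality of zero. -/
structure PEA (E : Type) where
  /-- `D a b` means that the partial sum `a + b` is defined. -/
  D : E → E → Prop
  /-- The partial addition (its value is relevant only when `D a b` holds). -/
  add : E → E → E
  zero : E
  one : E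
  /-- (PE1), definedness part. -/
  assoc_defined : ∀ a b c, (D a b ∧ D (add a b) c) ↔ (D b c ∧ D a (add b c))
  /-- (PE1), equality part. -/
  assoc_eq : ∀ a b c, D a b → D (add a b) c → add (add a b) c = add a (add b c)
  /-- (PE2), right complement. -/
  compl_right : ∀ a, ∃! d, D a d ∧ add a d = one
  /-- (PE2), left complement. -/
  compl_left : ∀ a, ∃! e, D e a ∧ add e a = one
  /-- (PE3). -/
  pe3 : ∀ a b, D a b →
    (∃ d, D d a ∧ add d a = add a b) ∧ (∃ e, D b e ∧ add b e = add a b)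
  /-- (PE4). -/
  pe4_right : ∀ a, D a one → a = zero
  pe4_left : ∀ a, D one a → a = zero
  D_zero_right : ∀ a, D a zero
  D_zero_left : ∀ a, D zero a
  add_zero : ∀ a, add a zero = a
  zero_add : ∀ a, add zero a = a

namespace PEA

variable {E : Type} (P : PEA E)

/-- The induced partial order: `a ≤ b` iff `a + c = b` for some `c`. -/
def le (a b : E) : Prop := ∃ c, P.D a c ∧ P.add a c = b

/-- The left complement `a⁻`, the unique element with `a⁻ + a = 1`. -/
noncomputable def lneg (a : E) : E := (P.compl_left a).choose

/-- The right complement `a~`, the unique element with `a + a~ = 1`. -/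
noncomputable def rneg (a : E) : E := (P.compl_right a).choose

/-- `E` is weakly commutative if `a + b` is defined iff `b + a` is defined. -/
def WeaklyCommutative : Prop := ∀ a b, P.D a b ↔ P.D b a

/-- `E` is symmetric if the two complements coincide. -/
def Symmetric : Prop := ∀ a, P.lneg a = P.rneg a

/-- A state on a PEA: a `[0,1]`-valued map, additive on existing sums, sending
`0 ↦ 0` and `1 ↦ 1`. -/
def IsState (s : E → ℝ) : Prop :=
  s P.zero = 0 ∧ s P.one = 1 ∧ (∀ a, 0 ≤ s a ∧ s a ≤ 1) ∧
    ∀ a b, P.D a b → s (P.add a b) = s a + s b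

/-- An `(n+1)`-valued discrete state: a state whose range is `{0, 1/n, …, 1}`. -/
def IsDiscreteState (n : ℕ) (s : E → ℝ) : Prop :=
  P.IsState s ∧ Set.range s = {x : ℝ | ∃ i ≤ n, x = (i : ℝ) / n}

/-- An ideal: a nonempty downward closed subset closed under existing sums. -/
def IsIdeal (I : Set E) : Prop :=
  I.Nonempty ∧ (∀ a i, i ∈ I → P.le a i → a ∈ I) ∧
    ∀ i j, i ∈ I → j ∈ I → P.D i j → P.add i j ∈ I

/-- A normal ideal: `a + i = j + a` implies `i ∈ I ↔ j ∈ I`. -/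
def IsNormalIdeal (I : Set E) : Prop :=
  P.IsIdeal I ∧ ∀ a i j, P.D a i → P.D j a → P.add a i = P.add j a → (i ∈ I ↔ j ∈ I)

/-- A maximal ideal: proper and not properly contained in a proper ideal. -/
def IsMaximalIdeal (I : Set E) : Prop :=
  P.IsIdeal I ∧ P.one ∉ I ∧ ∀ J, P.IsIdeal J → P.one ∉ J → I ⊆ J → I = J

/-- `n`-fold partial multiple of an element. -/
def nmul : ℕ → E → E
  | 0, _ => P.zero
  | k + 1, a => P.add (nmul k a) a

/-- Definedness of the `n`-fold partial multiple. -/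
def nmulD : ℕ → E → Prop
  | 0, _ => True
  | k + 1, a => nmulD k a ∧ P.D (P.nmul k a) a

/-- The set of elements of infinite isotropic index. -/
def Infinit : Set E := {a | ∀ k, P.nmulD k a}

/-- An `n`-decomposition of a PEA. -/
def IsNDecomp (n : ℕ) (F : ℕ → Set E) : Prop :=
  (∀ i, i ≤ n → (F i).Nonempty) ∧
  (∀ i j, i ≤ n → j ≤ n → i ≠ j → F i ∩ F j = ∅) ∧
  ((⋃ i ∈ Set.Iic n, F i) = Set.univ) ∧
  (∀ i, i ≤ n → P.lneg '' F i = F (n - i) ∧ P.rneg '' F i = F (n - i)) ∧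
  (∀ i j, i ≤ n → j ≤ n → ∀ x ∈ F i, ∀ y ∈ F j, P.D x y →
     i + j ≤ n ∧ P.add x y ∈ F (i + j))

/-- An `n`-perfect PEA: an `n`-decomposition with all sums `Eᵢ + Eⱼ`, `i+j < n`,
existing, and whose bottom slice is the unique maximal ideal. -/
def IsNPerfect (n : ℕ) (F : ℕ → Set E) : Prop :=
  P.IsNDecomp n F ∧
  (∀ i j, i + j < n → ∀ x ∈ F i, ∀ y ∈ F j, P.D x y) ∧
  (P.IsMaximalIdeal (F 0) ∧ ∀ J, P.IsMaximalIdeal J → J = F 0)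

end PEA

set_option linter.unusedSectionVars false
section IntervalPEA

variable {H : Type} [AddGroup H] [PartialOrder H]
  [CovariantClass H H (· + ·) (· ≤ ·)]
  [CovariantClass H H (Function.swap (· + ·)) (· ≤ ·)]

/-- The carrier of the interval `Γ(H, u) = [0, u]` in a po-group `H`. -/
def GammaSet (u : H) : Type := {x : H // 0 ≤ x ∧ x ≤ u}

namespace GammaInterval

variable (u : H) (hu : 0 ≤ u)

/-- Definedness of the partial addition of `Γ(H,u)`. -/
def gD (a b : GammaSet u) : Prop := a.1 + b.1 ≤ u

open Classical in
/-- The partial addition of `Γ(H,u)` (junk value `0` outside its domain). -/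
noncomputable def gadd (a b : GammaSet u) : GammaSet u :=
  if h : a.1 + b.1 ≤ u then ⟨a.1 + b.1, add_nonneg a.2.1 b.2.1, h⟩
  else ⟨0, le_refl 0, hu⟩

lemma gadd_val {a b : GammaSet u} (h : gD u a b) :
    (gadd u hu a b).1 = a.1 + b.1 := by
  have h' : a.1 + b.1 ≤ u := h
  exact congrArg Subtype.val
    (dif_pos h' : gadd u hu a b = ⟨a.1 + b.1, add_nonneg a.2.1 b.2.1, h'⟩)

/-- The interval `Γ(H, u)` as a pseudo-effect algebra. -/
noncomputable def Gamma : PEA (GammaSet u) where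
  D := gD u
  add := gadd u hu
  zero := ⟨0, le_refl 0, hu⟩
  one := ⟨u, hu, le_refl u⟩
  assoc_defined := by
    intro a b c
    constructor
    · rintro ⟨h1, h2⟩
      have h2a : (gadd u hu a b).1 + c.1 ≤ u := h2
      have h2' : a.1 + b.1 + c.1 ≤ u := by rwa [gadd_val u hu h1] at h2a
      have h3 : a.1 + (b.1 + c.1) ≤ u := by rwa [← add_assoc]
      have hbc : gD u b c := le_trans (le_add_of_nonneg_left a.2.1) h3
      refine ⟨hbc, ?_⟩
      show a.1 + (gadd u hu b c).1 ≤ u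
      rwa [gadd_val u hu hbc]
    · rintro ⟨h1, h2⟩
      have h2a : a.1 + (gadd u hu b c).1 ≤ u := h2
      have h2' : a.1 + (b.1 + c.1) ≤ u := by rwa [gadd_val u hu h1] at h2a
      have hab : gD u a b :=
        le_trans (add_le_add_right (le_add_of_nonneg_right c.2.1) a.1) h2'
      refine ⟨hab, ?_⟩
      show (gadd u hu a b).1 + c.1 ≤ u
      rw [gadd_val u hu hab, add_assoc]
      exact h2'
  assoc_eq := by
    intro a b c h1 h2
    have h2' : a.1 + b.1 + c.1 ≤ u := by
      have h2a : (gadd u hu a b).1 + c.1 ≤ u := h2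
      rwa [gadd_val u hu h1] at h2a
    have h3 : a.1 + (b.1 + c.1) ≤ u := by rwa [← add_assoc]
    have hbc : gD u b c := le_trans (le_add_of_nonneg_left a.2.1) h3
    have habc : gD u a (gadd u hu b c) := by
      show a.1 + (gadd u hu b c).1 ≤ u
      rwa [gadd_val u hu hbc]
    apply Subtype.ext
    rw [gadd_val u hu h2, gadd_val u hu h1, gadd_val u hu habc, gadd_val u hu hbc,
      add_assoc]
  compl_right := by
    intro a
    have h1 : (0 : H) ≤ -a.1 + u := by
      rw [le_neg_add_iff_add_le, add_zero]; exact a.2.2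
    have h2 : -a.1 + u ≤ u := by
      simpa using add_le_add_right (neg_nonpos.mpr a.2.1) u
    have hD : gD u a ⟨-a.1 + u, h1, h2⟩ := by
      show a.1 + (-a.1 + u) ≤ u
      rw [add_neg_cancel_left]
    refine ⟨⟨-a.1 + u, h1, h2⟩, ⟨hD, ?_⟩, ?_⟩
    · apply Subtype.ext
      rw [gadd_val u hu hD]
      exact add_neg_cancel_left a.1 u
    · rintro y ⟨hy1, hy2⟩
      apply Subtype.ext
      have hv := congrArg Subtype.val hy2
      rw [gadd_val u hu hy1] at hv
      show y.1 = -a.1 + u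
      rw [eq_neg_add_iff_add_eq]
      exact hv
  compl_left := by
    intro a
    have h1 : (0 : H) ≤ u + -a.1 := by
      simpa using add_le_add_right a.2.2 (-a.1)
    have h2 : u + -a.1 ≤ u := by
      simpa using add_le_add_left (neg_nonpos.mpr a.2.1) u
    have hD : gD u ⟨u + -a.1, h1, h2⟩ a := by
      show (u + -a.1) + a.1 ≤ u
      rw [neg_add_cancel_right]
    refine ⟨⟨u + -a.1, h1, h2⟩, ⟨hD, ?_⟩, ?_⟩
    · apply Subtype.ext
      rw [gadd_val u hu hD]
      exact neg_add_cancel_right u a.1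
    · rintro y ⟨hy1, hy2⟩
      apply Subtype.ext
      have hv := congrArg Subtype.val hy2
      rw [gadd_val u hu hy1] at hv
      show y.1 = u + -a.1
      rw [eq_add_neg_iff_add_eq]
      exact hv
  pe3 := by
    intro a b h
    constructor
    · have h1 : (0 : H) ≤ a.1 + b.1 + -a.1 := by
        have : a.1 + 0 + -a.1 ≤ a.1 + b.1 + -a.1 :=
          add_le_add_left (add_le_add_right b.2.1 a.1) (-a.1)
        simpa using this
      have h2 : a.1 + b.1 + -a.1 ≤ u := by
        calc a.1 + b.1 + -a.1 ≤ u + -a.1 := add_le_add_left h (-a.1)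
          _ ≤ u + 0 := add_le_add_right (neg_nonpos.mpr a.2.1) u
          _ = u := add_zero u
      have hD : gD u ⟨a.1 + b.1 + -a.1, h1, h2⟩ a := by
        show (a.1 + b.1 + -a.1) + a.1 ≤ u
        rw [neg_add_cancel_right]
        exact h
      refine ⟨⟨a.1 + b.1 + -a.1, h1, h2⟩, hD, ?_⟩
      apply Subtype.ext
      rw [gadd_val u hu hD, gadd_val u hu h]
      exact neg_add_cancel_right (a.1 + b.1) a.1
    · have h1 : (0 : H) ≤ -b.1 + (a.1 + b.1) := by
        have : -b.1 + b.1 ≤ -b.1 + (a.1 + b.1) :=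
          add_le_add_right (le_add_of_nonneg_left a.2.1) (-b.1)
        simpa using this
      have h2 : -b.1 + (a.1 + b.1) ≤ u := by
        calc -b.1 + (a.1 + b.1) ≤ -b.1 + u := add_le_add_right h (-b.1)
          _ ≤ 0 + u := add_le_add_left (neg_nonpos.mpr b.2.1) u
          _ = u := zero_add u
      have hD : gD u b ⟨-b.1 + (a.1 + b.1), h1, h2⟩ := by
        show b.1 + (-b.1 + (a.1 + b.1)) ≤ u
        rw [add_neg_cancel_left]
        exact h
      refine ⟨⟨-b.1 + (a.1 + b.1), h1, h2⟩, hD, ?_⟩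
      apply Subtype.ext
      rw [gadd_val u hu hD, gadd_val u hu h]
      exact add_neg_cancel_left b.1 (a.1 + b.1)
  pe4_right := by
    intro a h
    apply Subtype.ext
    have h' : a.1 + u ≤ u := h
    have h'' : a.1 + u + -u ≤ u + -u := add_le_add_left h' (-u)
    simp only [add_neg_cancel_right, add_neg_cancel] at h''
    exact le_antisymm h'' a.2.1
  pe4_left := by
    intro a h
    apply Subtype.ext
    have h' : u + a.1 ≤ u := h
    have h'' : -u + (u + a.1) ≤ -u + u := add_le_add_right h' (-u)
    simp only [neg_add_cancel_left, neg_add_cancel] at h''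
    exact le_antisymm h'' a.2.1
  D_zero_right := by
    intro a
    show a.1 + 0 ≤ u
    simpa using a.2.2
  D_zero_left := by
    intro a
    show 0 + a.1 ≤ u
    simpa using a.2.2
  add_zero := by
    intro a
    apply Subtype.ext
    have h : gD u a ⟨0, le_refl 0, hu⟩ := by
      show a.1 + 0 ≤ u; simpa using a.2.2
    rw [gadd_val u hu h]
    exact add_zero a.1
  zero_add := by
    intro a
    apply Subtype.ext
    have h : gD u ⟨0, le_refl 0, hu⟩ a := by
      show 0 + a.1 ≤ u; simpa using a.2.2
    rw [gadd_val u hu h]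
    exact zero_add a.1

end GammaInterval

end IntervalPEA

section ZLexSection

/-- The lexicographic product `ℤ ⃗× G`. -/
def ZLex (G : Type) : Type := ℤ × G

namespace ZLex

variable {G : Type} [AddGroup G] [PartialOrder G]
  [CovariantClass G G (· + ·) (· ≤ ·)]
  [CovariantClass G G (Function.swap (· + ·)) (· ≤ ·)]

instance : AddGroup (ZLex G) := inferInstanceAs (AddGroup (ℤ × G))

/-- Build an element of `ℤ ⃗× G`. -/
def mk (i : ℤ) (g : G) : ZLex G := ((i, g) : ℤ × G)

/-- First (integer) component. -/
def idx (x : ZLex G) : ℤ := (x : ℤ × G).1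

/-- Second (group) component. -/
def snd (x : ZLex G) : G := (x : ℤ × G).2

instance : PartialOrder (ZLex G) where
  le p q := idx p < idx q ∨ (idx p = idx q ∧ snd p ≤ snd q)
  le_refl p := Or.inr ⟨rfl, le_refl _⟩
  le_trans p q r := by
    rintro (h | ⟨e, h⟩) (h' | ⟨e', h'⟩)
    · exact Or.inl (lt_trans h h')
    · exact Or.inl (lt_of_lt_of_eq h e')
    · exact Or.inl (lt_of_eq_of_lt e h')
    · exact Or.inr ⟨e.trans e', le_trans h h'⟩
  le_antisymm p q := by
    rintro (h | ⟨e, h⟩) (h' | ⟨e', h'⟩)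
    · exact absurd (lt_trans h h') (lt_irrefl _)
    · exact absurd h (by rw [e']; exact lt_irrefl _)
    · exact absurd h' (by rw [e]; exact lt_irrefl _)
    · have h2 : snd p = snd q := le_antisymm h h'
      show ((idx p, snd p) : ℤ × G) = ((idx q, snd q) : ℤ × G)
      rw [e, h2]

lemma le_def (p q : ZLex G) :
    p ≤ q ↔ idx p < idx q ∨ (idx p = idx q ∧ snd p ≤ snd q) := Iff.rfl

lemma add_def (p q : ZLex G) :
    p + q = mk (idx p + idx q) (snd p + snd q) := rfl

instance : CovariantClass (ZLex G) (ZLex G) (· + ·) (· ≤ ·) := by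
  constructor
  rintro c a b (h | ⟨e, h⟩)
  · exact Or.inl (Int.add_lt_add_left h _)
  · exact Or.inr ⟨by show idx c + idx a = idx c + idx b; rw [e],
      add_le_add_right h _⟩

instance : CovariantClass (ZLex G) (ZLex G) (Function.swap (· + ·)) (· ≤ ·) := by
  constructor
  rintro c a b (h | ⟨e, h⟩)
  · exact Or.inl (Int.add_lt_add_right h _)
  · exact Or.inr ⟨by show idx a + idx c = idx b + idx c; rw [e],
      add_le_add_left h _⟩

end ZLex

end ZLexSection

/-- Extremal states on a PEA. -/
def PEA.IsExtremalState {E : Type} (P : PEA E) (s : E → ℝ) : Prop :=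
  P.IsState s ∧ ∀ (s₁ s₂ : E → ℝ) (α : ℝ), P.IsState s₁ → P.IsState s₂ →
    0 < α → α < 1 → (∀ x, s x = α * s₁ x + (1 - α) * s₂ x) → s₁ = s ∧ s₂ = s

/-!
In `E = Γ(ℤ ⃗× G, (n,0))` every element `(0,g)`, `g ≥ 0`, has all its multiples in `E`, so it
lies in `Infinit(E)` and is killed by every state. Hence a state does not change when an element
is enlarged within its level `i`, and by directedness any two elements of level `i` have a common
upper bound of level `i`: a state depends only on the level. Since `(i,0)` is the `i`-th multiple
of `(1,0)` and `n • (1,0)` is the unit, the only state is `s(i,g) = i/n`; its range is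
`{0, 1/n, …, 1}`, and being the only state it is extremal.
-/

namespace PEA

variable {E : Type} {P : PEA E} {s : E → ℝ}

theorem IsState.map_nmul (hs : P.IsState s) {a : E} :
    ∀ {k : ℕ}, P.nmulD k a → s (P.nmul k a) = k * s a
  | 0, _ => by simpa [nmul] using hs.1
  | k + 1, ⟨hk, hD⟩ => by
    rw [nmul, hs.2.2.2 _ _ hD, hs.map_nmul hk]
    push_cast
    ring

/-- `Infinit(E) ⊆ Ker(s)`: all multiples of `a` exist, so `k * s a ≤ 1` for every `k`. -/
theorem IsState.eq_zero_of_mem_Infinit (hs : P.IsState s) {a : E} (ha : a ∈ P.Infinit) :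
    s a = 0 := by
  refine le_antisymm ?_ (hs.2.2.1 a).1
  by_contra! hpos
  obtain ⟨k, hk⟩ := exists_nat_gt (1 / s a)
  have hk1 : (k : ℝ) * s a ≤ 1 := hs.map_nmul (ha k) ▸ (hs.2.2.1 _).2
  rw [div_lt_iff₀ hpos] at hk
  linarith

theorem isExtremalState_of_forall_eq (hs : P.IsState s) (huniq : ∀ t, P.IsState t → t = s) :
    P.IsExtremalState s :=
  ⟨hs, fun _ _ _ h₁ h₂ _ _ _ => ⟨huniq _ h₁, huniq _ h₂⟩⟩

end PEA

namespace GammaInterval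

variable {H : Type} [AddGroup H] [PartialOrder H]
  [CovariantClass H H (· + ·) (· ≤ ·)]
  [CovariantClass H H (Function.swap (· + ·)) (· ≤ ·)]
  {u : H} {hu : 0 ≤ u}

theorem nmulD_and_nmul_val {a : GammaSet u} : ∀ {k : ℕ}, k • a.1 ≤ u →
    (Gamma u hu).nmulD k a ∧ ((Gamma u hu).nmul k a).1 = k • a.1
  | 0, _ => ⟨trivial, (zero_nsmul _).symm⟩
  | k + 1, h => by
    rw [succ_nsmul] at h
    obtain ⟨hD, hval⟩ := nmulD_and_nmul_val ((le_add_of_nonneg_right a.2.1).trans h)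
    have hsum : gD u ((Gamma u hu).nmul k a) a := by
      show _ + _ ≤ u
      rwa [hval]
    exact ⟨⟨hD, hsum⟩, by
      show (gadd u hu _ _).1 = _
      rw [gadd_val u hu hsum, hval, succ_nsmul]⟩

theorem mem_Infinit {a : GammaSet u} (h : ∀ k : ℕ, k • a.1 ≤ u) : a ∈ (Gamma u hu).Infinit :=
  fun _ => (nmulD_and_nmul_val (h _)).1

theorem exists_state_eq_add_of_le {s : GammaSet u → ℝ} (hs : (Gamma u hu).IsState s)
    {x y : GammaSet u} (h : x.1 ≤ y.1) :
    ∃ d : GammaSet u, d.1 = -x.1 + y.1 ∧ s y = s x + s d := by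
  have hd0 : 0 ≤ -x.1 + y.1 := le_neg_add_iff_add_le.2 (by rwa [add_zero])
  have hdu : -x.1 + y.1 ≤ u := neg_add_le_iff_le_add.2 (y.2.2.trans (le_add_of_nonneg_left x.2.1))
  let d : GammaSet u := ⟨-x.1 + y.1, hd0, hdu⟩
  have hD : gD u x d := by
    show x.1 + (-x.1 + y.1) ≤ u
    rw [add_neg_cancel_left]
    exact y.2.2
  have hsum : gadd u hu x d = y := Subtype.ext <| by
    rw [gadd_val u hu hD]
    exact add_neg_cancel_left x.1 y.1
  exact ⟨d, rfl, hsum ▸ hs.2.2.2 x d hD⟩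

end GammaInterval

namespace ZLex

variable {G : Type}

theorem ext {x y : ZLex G} (h1 : idx x = idx y) (h2 : snd x = snd y) : x = y := Prod.ext h1 h2

@[simp] theorem idx_mk (i : ℤ) (g : G) : idx (mk i g) = i := rfl
@[simp] theorem snd_mk (i : ℤ) (g : G) : snd (mk i g) = g := rfl

section Order

variable [PartialOrder G]

theorem idx_le_idx {x y : ZLex G} (h : x ≤ y) : idx x ≤ idx y :=
  h.elim le_of_lt fun h => h.1.le

theorem le_of_idx_lt {x y : ZLex G} (h : idx x < idx y) : x ≤ y := Or.inl h

theorem le_of_idx_eq {x y : ZLex G} (h : idx x = idx y) (hg : snd x ≤ snd y) : x ≤ y :=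
  Or.inr ⟨h, hg⟩

end Order

variable [AddGroup G]

@[simp] theorem idx_zero : idx (0 : ZLex G) = 0 := rfl
@[simp] theorem idx_add (x y : ZLex G) : idx (x + y) = idx x + idx y := rfl
@[simp] theorem idx_neg (x : ZLex G) : idx (-x) = -idx x := rfl
@[simp] theorem idx_nsmul (k : ℕ) (x : ZLex G) : idx (k • x) = k * idx x := by
  show k • idx x = _
  rw [nsmul_eq_mul]
@[simp] theorem snd_nsmul (k : ℕ) (x : ZLex G) : snd (k • x) = k • snd x := rfl

section Interval

open GammaInterval

variable [PartialOrder G] {n : ℕ}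

theorem mk_zero_mem {i : ℤ} (h0 : 0 ≤ i) (hi : i ≤ n) :
    0 ≤ mk i (0 : G) ∧ mk i (0 : G) ≤ mk (n : ℤ) 0 :=
  ⟨h0.lt_or_eq.imp id fun h => ⟨h, le_rfl⟩, hi.lt_or_eq.imp id fun h => ⟨h, le_rfl⟩⟩

theorem idx_nonneg (x : GammaSet (mk (n : ℤ) (0 : G))) : 0 ≤ idx x.1 := idx_le_idx x.2.1

theorem idx_le (x : GammaSet (mk (n : ℤ) (0 : G))) : idx x.1 ≤ n := idx_le_idx x.2.2

/-- Two elements of the same level `i` have a common upper bound on that level: `(i, c)` with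
`c` an upper bound of their `G`-parts if `i < n`, and the unit `(n, 0)` if `i = n`. -/
theorem exists_upper_bound_of_idx_eq (hdir : ∀ a b : G, ∃ c : G, a ≤ c ∧ b ≤ c)
    {x y : GammaSet (mk (n : ℤ) (0 : G))} (he : idx x.1 = idx y.1) :
    ∃ z : GammaSet (mk (n : ℤ) (0 : G)), x.1 ≤ z.1 ∧ y.1 ≤ z.1 ∧ idx x.1 = idx z.1 := by
  rcases (idx_le x).lt_or_eq with hlt | heq
  · obtain ⟨c, hxc, hyc⟩ := hdir (snd x.1) (snd y.1)
    have hz0 : 0 ≤ mk (idx x.1) c :=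
      x.2.1.imp id fun h => ⟨h.1, h.2.trans hxc⟩
    exact ⟨⟨mk (idx x.1) c, hz0, le_of_idx_lt hlt⟩, le_of_idx_eq rfl hxc,
      le_of_idx_eq he.symm hyc, rfl⟩
  · have hu : 0 ≤ mk (n : ℤ) (0 : G) := (mk_zero_mem (Int.natCast_nonneg n) le_rfl).1
    exact ⟨⟨mk (n : ℤ) 0, hu, le_rfl⟩, x.2.2, y.2.2, heq⟩

theorem range_idx_div :
    Set.range (fun x : GammaSet (mk (n : ℤ) (0 : G)) => (idx x.1 : ℝ) / n) =
      {r : ℝ | ∃ i ≤ n, r = (i : ℝ) / n} := by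
  ext r
  constructor
  · rintro ⟨x, rfl⟩
    obtain ⟨k, hk⟩ := Int.eq_ofNat_of_zero_le (idx_nonneg x)
    exact ⟨k, by exact_mod_cast hk ▸ idx_le x, by simp [hk]⟩
  · rintro ⟨i, hi, rfl⟩
    exact ⟨⟨mk i 0, mk_zero_mem (Int.natCast_nonneg i) (by exact_mod_cast hi)⟩, by simp⟩

variable [CovariantClass G G (· + ·) (· ≤ ·)]
  [CovariantClass G G (Function.swap (· + ·)) (· ≤ ·)]
  {hu : 0 ≤ mk (n : ℤ) (0 : G)} {s : GammaSet (mk (n : ℤ) (0 : G)) → ℝ}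

theorem state_eq_zero_of_idx_eq_zero (hn : 0 < n) (hs : (Gamma _ hu).IsState s)
    {x : GammaSet (mk (n : ℤ) (0 : G))} (hx : idx x.1 = 0) : s x = 0 :=
  hs.eq_zero_of_mem_Infinit <| mem_Infinit fun k => le_of_idx_lt <| by simp [hx, hn]

theorem state_eq_of_le_of_idx_eq (hn : 0 < n) (hs : (Gamma _ hu).IsState s)
    {x y : GammaSet (mk (n : ℤ) (0 : G))} (hle : x.1 ≤ y.1) (he : idx x.1 = idx y.1) :
    s x = s y := by
  obtain ⟨d, hd, hsum⟩ := exists_state_eq_add_of_le hs hle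
  rw [hsum, state_eq_zero_of_idx_eq_zero (x := d) hn hs (by simp [hd, he]), add_zero]

theorem state_eq_of_idx_eq (hn : 0 < n) (hdir : ∀ a b : G, ∃ c : G, a ≤ c ∧ b ≤ c)
    (hs : (Gamma _ hu).IsState s) {x y : GammaSet (mk (n : ℤ) (0 : G))}
    (he : idx x.1 = idx y.1) : s x = s y := by
  obtain ⟨z, hxz, hyz, hz⟩ := exists_upper_bound_of_idx_eq hdir he
  rw [state_eq_of_le_of_idx_eq hn hs hxz hz,
    state_eq_of_le_of_idx_eq hn hs hyz (he.symm.trans hz)]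

theorem state_eq_idx_div (hn : 0 < n) (hdir : ∀ a b : G, ∃ c : G, a ≤ c ∧ b ≤ c)
    (hs : (Gamma _ hu).IsState s) (x : GammaSet (mk (n : ℤ) (0 : G))) :
    s x = idx x.1 / n := by
  let e : GammaSet (mk (n : ℤ) (0 : G)) :=
    ⟨mk 1 0, mk_zero_mem zero_le_one (by exact_mod_cast hn)⟩
  have hmul : ∀ y : GammaSet (mk (n : ℤ) (0 : G)), s y = idx y.1 * s e := by
    intro y
    obtain ⟨k, hk⟩ := Int.eq_ofNat_of_zero_le (idx_nonneg y)
    have hkn : k • e.1 ≤ mk (n : ℤ) 0 := by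
      have : k • e.1 = mk k 0 := ext (by simp [e]) (by simp [e])
      rw [this]
      exact (mk_zero_mem (Int.natCast_nonneg k) (hk ▸ idx_le y)).2
    obtain ⟨hD, hval⟩ := nmulD_and_nmul_val (hu := hu) hkn
    rw [state_eq_of_idx_eq hn hdir hs (y := (Gamma _ hu).nmul k e) (by simp [hval, hk, e]),
      hs.map_nmul hD, hk]
    norm_cast
  have hse : s e = 1 / n := by
    have hone := hmul ⟨mk (n : ℤ) 0, hu, le_rfl⟩
    rw [show s ⟨mk (n : ℤ) 0, hu, le_rfl⟩ = 1 from hs.2.1, idx_mk, Int.cast_natCast] at hone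
    rw [eq_div_iff (by positivity), hone, mul_comm]
  rw [hmul x, hse, mul_one_div]

theorem isState_idx_div (hn : 0 < n) :
    (Gamma _ hu).IsState fun x : GammaSet (mk (n : ℤ) (0 : G)) => (idx x.1 : ℝ) / n := by
  have hn' : (0 : ℝ) < n := by exact_mod_cast hn
  refine ⟨by simp [Gamma], by simp [Gamma, hn.ne'], fun x => ⟨?_, ?_⟩, fun x y h => ?_⟩
  · exact div_nonneg (by exact_mod_cast idx_nonneg x) hn'.le
  · exact div_le_one_of_le₀ (by exact_mod_cast idx_le x) hn'.le
  · show (idx (gadd _ hu x y).1 : ℝ) / n = _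
    rw [gadd_val _ hu h, idx_add, Int.cast_add, add_div]

end Interval

end ZLex

/-- for a directed po-group `G`, the PEA `Γ(ℤ ⃗× G, (n,0))`
admits exactly one state, namely `s(i,g) = i/n`, and this state is an
`(n+1)`-valued discrete state (and hence extremal). -/
theorem stmt17 (G : Type) [AddGroup G] [PartialOrder G]
    [CovariantClass G G (· + ·) (· ≤ ·)]
    [CovariantClass G G (Function.swap (· + ·)) (· ≤ ·)]
    (hdir : ∀ a b : G, ∃ c : G, a ≤ c ∧ b ≤ c)
    (n : ℕ) (hn : 1 ≤ n)
    (P : PEA (GammaSet (ZLex.mk (n : ℤ) (0 : G))))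
    (hP : P = GammaInterval.Gamma (ZLex.mk (n : ℤ) (0 : G)) (by exact Or.inl (show (0 : ℤ) < (n : ℤ) by exact_mod_cast hn))) :
    (∃! s : GammaSet (ZLex.mk (n : ℤ) (0 : G)) → ℝ, P.IsState s) ∧
    ∀ s : GammaSet (ZLex.mk (n : ℤ) (0 : G)) → ℝ, P.IsState s →
      (∀ x, s x = (ZLex.idx x.1 : ℝ) / (n : ℝ)) ∧
      P.IsDiscreteState n s ∧ P.IsExtremalState s := by
  have hunique : ∀ s, P.IsState s → s = fun x => (ZLex.idx x.1 : ℝ) / n :=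
    fun s hs => funext (ZLex.state_eq_idx_div hn hdir (hP ▸ hs))
  refine ⟨⟨_, hP ▸ ZLex.isState_idx_div hn, hunique⟩, fun s hs => ?_⟩
  obtain rfl := hunique s hs
  exact ⟨fun _ => rfl, ⟨hs, ZLex.range_idx_div⟩, PEA.isExtremalState_of_forall_eq hs hunique⟩
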